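/- arXiv:2309.08841 — 8 statements merged into one kernel-verified Lean document; each statement's English description precedes it below -/
import Mathlib

section
/- For all n ≥ 0, the sequence A(n) := ((n+2)!/(n+1)) · Σ_{i=0}^{n+2} (-1)^i/i! satisfies the recurrence A(n) = n·A(n-1) + (n-1)·A(n-2) for n ≥ 2, with A(0) = A(1) = 1. -/
/-! `Areal n` is `D (n + 2) / (n + 1)` for the derangement numbers `D`, and the derangement
recurrence `D (n + 2) = (n + 1) (D n + D (n + 1))` turns this into `D n + D (n + 1)`. The claimed
recurrence for `Areal` is then two instances of the derangement recurrence. -/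

open Finset

/-- A(n) := ((n+2)!/(n+1)) · Σ_{i=0}^{n+2} (-1)^i/i!. -/
noncomputable def Areal (n : ℕ) : ℝ :=
  ((Nat.factorial (n + 2) : ℝ) / (n + 1)) * ∑ i ∈ Finset.range (n + 3), (-1 : ℝ) ^ i / (Nat.factorial i)

theorem cast_numDerangements_add_two {R : Type*} [CommSemiring R] (n : ℕ) :
    (numDerangements (n + 2) : R) = (n + 1) * (numDerangements n + numDerangements (n + 1)) := by
  rw [numDerangements_add_two]
  push_cast
  ring

theorem factorial_mul_sum_neg_one_pow_div_factorial {K : Type*} [Field K] [CharZero K] (n : ℕ) :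
    (n.factorial : K) * ∑ i ∈ range (n + 1), (-1 : K) ^ i / i.factorial = numDerangements n := by
  induction n with
  | zero => simp
  | succ n ih =>
    have hD : (numDerangements (n + 1) : K) = (n + 1) * numDerangements n + (-1) ^ (n + 1) := by
      have := congrArg (Int.cast : ℤ → K) (numDerangements_succ n)
      push_cast at this
      rw [this, pow_succ]
      ring
    have hfact : ((n + 1).factorial : K) ≠ 0 :=
      Nat.cast_ne_zero.mpr (Nat.factorial_ne_zero _)
    rw [sum_range_succ, mul_add, mul_div_cancel₀ _ hfact, Nat.factorial_succ, Nat.cast_mul,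
      mul_assoc, ih, hD]
    push_cast
    ring

theorem Areal_eq_numDerangements_add (n : ℕ) :
    Areal n = numDerangements n + numDerangements (n + 1) := by
  rw [Areal, div_mul_eq_mul_div, factorial_mul_sum_neg_one_pow_div_factorial (n + 2),
    cast_numDerangements_add_two, mul_div_cancel_left₀ _ (by positivity)]

theorem stmt0 :
    (∀ n : ℕ, 2 ≤ n → Areal n = n * Areal (n - 1) + (n - 1) * Areal (n - 2)) ∧
    Areal 0 = 1 ∧ Areal 1 = 1 := by
  simp only [Areal_eq_numDerangements_add]
  refine ⟨fun n hn => ?_, by simp, by simp [numDerangements_add_two]⟩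
  obtain ⟨k, rfl⟩ : ∃ k, n = k + 2 := ⟨n - 2, by omega⟩
  simp only [Nat.add_sub_cancel, show k + 2 - 1 = k + 1 by omega, cast_numDerangements_add_two]
  push_cast
  ring
end

section
/- The exponential generating function of A(n) satisfies Σ_{n≥0} A(n) x^n / n! = e^{-x}/(1-x)^2 as an identity of formal power series (equivalently, for |x| < 1). -/
/-!
Normalising by `n!`, the recurrence becomes `A(n+1)/(n+1)! = A(n)/n! + D(n+1)/(n+1)!`, where
`D(n) = n! ∑_{k ≤ n} (-1)^k / k!` counts derangements (indeed `A(n) = D(n+1) + D(n)`). Hence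
`A(n)/n! = ∑_{j ≤ n} ∑_{k ≤ j} (-1)^k / k!`: the coefficients of `e^{-x}` summed twice, which is
what multiplying a power series by `1/(1-x)` twice does.
-/

open Finset Filter

/-- Sequence A000255: A(0)=A(1)=1, A(n)=n·A(n-1)+(n-1)·A(n-2). -/
def A : ℕ → ℕ
  | 0 => 1
  | 1 => 1
  | n + 2 => (n + 2) * A (n + 1) + (n + 1) * A n

/-- A(n,k) := C(n-1,k-1)·A(k-1). -/
def Ank (n k : ℕ) : ℕ := Nat.choose (n - 1) (k - 1) * A (k - 1)

open Nat

section GeometricCauchyProduct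

lemma sum_range_mul_pow_eq_sum_mul_pow_mul_pow {R : Type*} [CommSemiring R] (f : ℕ → R) (x : R)
    (n : ℕ) :
    (∑ k ∈ range (n + 1), f k) * x ^ n = ∑ k ∈ range (n + 1), f k * x ^ k * x ^ (n - k) := by
  rw [sum_mul]
  refine sum_congr rfl fun k hk => ?_
  rw [mul_assoc, ← pow_add, Nat.add_sub_cancel' (mem_range_succ_iff.mp hk)]

variable {𝕜 : Type*} [NormedField 𝕜] {f : ℕ → 𝕜} {x : 𝕜}

lemma summable_norm_sum_range_mul_pow (hx : ‖x‖ < 1) (hf : Summable fun n => ‖f n * x ^ n‖) :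
    Summable fun n => ‖(∑ k ∈ range (n + 1), f k) * x ^ n‖ := by
  simpa only [sum_range_mul_pow_eq_sum_mul_pow_mul_pow] using
    summable_norm_sum_mul_range_of_summable_norm hf (summable_norm_geometric_of_norm_lt_one hx)

lemma hasSum_sum_range_mul_pow [CompleteSpace 𝕜] (hx : ‖x‖ < 1)
    (hf : Summable fun n => ‖f n * x ^ n‖) :
    HasSum (fun n => (∑ k ∈ range (n + 1), f k) * x ^ n) ((∑' n, f n * x ^ n) / (1 - x)) := by
  have h := hasSum_sum_range_mul_of_summable_norm hf (summable_norm_geometric_of_norm_lt_one hx)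
  rw [tsum_geometric_of_norm_lt_one hx, ← div_eq_mul_inv] at h
  simpa only [sum_range_mul_pow_eq_sum_mul_pow_mul_pow] using h

end GeometricCauchyProduct

section Derangements

variable {K : Type*} [Field K] [CharZero K]

lemma numDerangements_div_factorial (n : ℕ) :
    (numDerangements n : K) / n ! = ∑ k ∈ range (n + 1), (-1 : K) ^ k / k ! := by
  induction n with
  | zero => simp
  | succ n ih =>
    rw [sum_range_succ, ← ih, ← Int.cast_natCast, numDerangements_succ, factorial_succ]
    push_cast
    field_simp
    ring

lemma A_eq_numDerangements_succ_add (n : ℕ) :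
    A n = numDerangements (n + 1) + numDerangements n := by
  induction n using Nat.twoStepInduction with
  | zero => rfl
  | one => rfl
  | more n ih₁ ih₂ =>
    rw [A, ih₁, ih₂, numDerangements_add_two (n + 1), numDerangements_add_two n]
    ring

lemma A_succ (n : ℕ) : A (n + 1) = (n + 1) * A n + numDerangements (n + 1) := by
  rw [A_eq_numDerangements_succ_add (n + 1), A_eq_numDerangements_succ_add n,
    numDerangements_add_two n]
  ring

lemma A_div_factorial (n : ℕ) :
    (A n : K) / n ! = ∑ j ∈ range (n + 1), (numDerangements j : K) / j ! := by
  induction n with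
  | zero => simp [A]
  | succ n ih =>
    rw [sum_range_succ, ← ih, A_succ, factorial_succ]
    push_cast
    field_simp

end Derangements

theorem stmt1 (x : ℝ) (hx : |x| < 1) :
    ∑' n : ℕ, (A n : ℝ) * x ^ n / (Nat.factorial n) = Real.exp (-x) / (1 - x) ^ 2 := by
  have hx' : ‖x‖ < 1 := by rwa [Real.norm_eq_abs]
  have hexp : HasSum (fun k => (-1 : ℝ) ^ k / k ! * x ^ k) (Real.exp (-x)) := by
    have h := NormedSpace.expSeries_div_hasSum_exp (-x)
    rw [← Real.exp_eq_exp_ℝ] at h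
    refine h.congr_fun fun k => ?_
    rw [div_mul_eq_mul_div, neg_pow x]
  have hexp_norm : Summable fun k => ‖(-1 : ℝ) ^ k / k ! * x ^ k‖ :=
    (Real.summable_pow_div_factorial |x|).congr fun k => by simp [div_eq_inv_mul]
  have h := hasSum_sum_range_mul_pow hx' (summable_norm_sum_range_mul_pow hx' hexp_norm)
  rw [(hasSum_sum_range_mul_pow hx' hexp_norm).tsum_eq, hexp.tsum_eq] at h
  convert h.tsum_eq using 1
  · refine tsum_congr fun n => ?_
    simp only [mul_div_right_comm _ (x ^ n), A_div_factorial, numDerangements_div_factorial]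
  · rw [div_div, sq]
end

section
/- For every n ≥ 1, Σ_{k=1}^{n} A(n,k)/n! = 1, where A(n,k) = C(n-1, k-1)·A(k-1). -/
open Finset Filter

/-! With `D` the derangement numbers, `A k = D k + D (k + 1)`, so by Pascal's rule
`∑ C(m,k) A k = ∑ C(m+1,j) D j`. This is `(m+1)!`: classifying the permutations of `m + 1`
points by their fixed points gives `∑ C(n,j) D j = n!`, which we prove from the recurrence
`D (k+2) = (k+1) (D k + D (k+1))` together with Pascal's rule. -/

theorem sum_range_succ_choose_mul (f : ℕ → ℕ) (m : ℕ) :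
    ∑ k ∈ range (m + 1 + 1), (m + 1).choose k * f k =
      ∑ k ∈ range (m + 1), m.choose k * (f k + f (k + 1)) := by
  simp only [mul_add, sum_add_distrib]
  exact sum_choose_succ_mul (fun i _ => f i) m

theorem sum_choose_mul_numDerangements_succ (n : ℕ) :
    ∑ k ∈ range (n + 1), n.choose k * numDerangements (k + 1) =
      n * ∑ k ∈ range (n + 1), n.choose k * numDerangements k := by
  cases n with
  | zero => simp
  | succ m =>
    have hterm : ∀ k ∈ range (m + 1),
        (m + 1).choose (k + 1) * numDerangements (k + 2) =
          (m + 1) * (m.choose k * (numDerangements k + numDerangements (k + 1))) := by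
      intro k _
      rw [numDerangements_add_two, ← mul_assoc, ← Nat.add_one_mul_choose_eq]
      ring
    rw [sum_range_succ', sum_congr rfl hterm, ← mul_sum, sum_range_succ_choose_mul]
    simp

theorem sum_choose_mul_numDerangements (n : ℕ) :
    ∑ k ∈ range (n + 1), n.choose k * numDerangements k = n.factorial := by
  induction n with
  | zero => simp
  | succ n ih =>
    rw [sum_range_succ_choose_mul]
    simp only [mul_add, sum_add_distrib, sum_choose_mul_numDerangements_succ, ih,
      Nat.factorial_succ]
    ring

theorem A_eq_numDerangements_add (n : ℕ) : A n = numDerangements n + numDerangements (n + 1) := by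
  induction n using Nat.twoStepInduction with
  | zero => rfl
  | one => rfl
  | more n ih₀ ih₁ =>
    rw [A, ih₀, ih₁, numDerangements_add_two (n + 1), numDerangements_add_two n]
    ring

theorem sum_choose_mul_A (m : ℕ) : ∑ k ∈ range (m + 1), m.choose k * A k = (m + 1).factorial := by
  simp only [A_eq_numDerangements_add]
  rw [← sum_choose_mul_numDerangements, sum_range_succ_choose_mul]

theorem stmt2 (n : ℕ) (hn : 1 ≤ n) :
    ∑ k ∈ Finset.Icc 1 n, (Ank n k : ℝ) / (Nat.factorial n) = 1 := by
  obtain ⟨m, rfl⟩ : ∃ m, n = m + 1 := ⟨n - 1, by omega⟩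
  have hsum : ∑ k ∈ Icc 1 (m + 1), Ank (m + 1) k = (m + 1).factorial := by
    rw [← sum_choose_mul_A, ← Finset.Ico_add_one_right_eq_Icc, sum_Ico_eq_sum_range]
    simp [Ank]
  rw [← sum_div, ← Nat.cast_sum, hsum, div_self (by positivity)]
end

section
/- As formal power series in x and z: Σ_{n≥1} (Σ_{k=1}^{n} (A(n,k)/n!)·z^k)·n·x^n = x·z·e^{x(1-z)}/(1-xz)^2. -/
open Finset Filter

/-!
With `E m = ∑_{k<m} (-1)^k / k!`, both `A n / n!` and the `n`-th Cauchy coefficient of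
`e^{-t} · ∑ (n + 1) tⁿ` equal `(n + 2) E (n + 3)`; the induction runs on the three-term
recurrence `(m + 2) E (m + 3) = (m + 1) E (m + 2) + E (m + 1)`. Hence `A` has exponential
generating function `e^{-t} / (1 - t)²`. Since `A(m+1, j+1) (m+1) / (m+1)! = A j / (j! (m-j)!)`,
the series of the theorem is `x z` times the Cauchy product of `∑ A j / j! (x z)^j` with
`∑ x^i / i!`, that is `x z e^{-x z} eˣ / (1 - x z)²`.
-/

open scoped Nat

noncomputable def expNegOnePartialSum (m : ℕ) : ℝ := ∑ k ∈ range m, (-1) ^ k / k !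

local notation "E" => expNegOnePartialSum

lemma add_two_mul_expNegOnePartialSum_add_three (m : ℕ) :
    (m + 2) * E (m + 3) = (m + 1) * E (m + 2) + E (m + 1) := by
  simp only [expNegOnePartialSum, sum_range_succ, Nat.factorial_succ, pow_succ]
  push_cast
  field_simp
  ring

lemma A_add_two_div_factorial (n : ℕ) :
    (A (n + 2) : ℝ) / (n + 2)! = A (n + 1) / (n + 1)! + A n / n ! / (n + 2) := by
  simp only [A, Nat.factorial_succ]
  push_cast
  field_simp
  ring

lemma A_div_factorial_s4 (n : ℕ) : (A n : ℝ) / n ! = (n + 2) * E (n + 3) := by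
  induction n using Nat.twoStepInduction with
  | zero => norm_num [A, expNegOnePartialSum, sum_range_succ]
  | one => norm_num [A, expNegOnePartialSum, sum_range_succ, Nat.factorial]
  | more n ih₀ ih₁ =>
    rw [A_add_two_div_factorial, ih₀, ih₁, mul_div_cancel_left₀ _ (by positivity)]
    have h := add_two_mul_expNegOnePartialSum_add_three (n + 2)
    push_cast at h ⊢
    linear_combination -h

lemma sum_neg_one_pow_div_factorial_mul_sub (n : ℕ) :
    ∑ k ∈ range (n + 1), (-1) ^ k / k ! * ((n : ℝ) + 1 - k) = (n + 2) * E (n + 3) := by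
  induction n with
  | zero => norm_num [expNegOnePartialSum, sum_range_succ]
  | succ n ih =>
    have hsplit : ∑ k ∈ range (n + 2), (-1) ^ k / k ! * ((n + 1 : ℕ) + 1 - k : ℝ)
        = ∑ k ∈ range (n + 1), (-1) ^ k / k ! * ((n : ℝ) + 1 - k) + E (n + 2) := by
      calc _ = ∑ k ∈ range (n + 2), ((-1) ^ k / k ! * ((n : ℝ) + 1 - k) + (-1) ^ k / k !) :=
            sum_congr rfl fun k _ => by push_cast; ring
        _ = _ := by rw [sum_add_distrib, sum_range_succ]; simp [expNegOnePartialSum]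
    rw [hsplit, ih]
    have h := add_two_mul_expNegOnePartialSum_add_three (n + 1)
    push_cast at h ⊢
    linear_combination -h

lemma A_div_factorial_mul_pow (t : ℝ) (n : ℕ) :
    (A n : ℝ) / n ! * t ^ n =
      ∑ k ∈ range (n + 1), (-t) ^ k / k ! * ((((n - k : ℕ) : ℝ) + 1) * t ^ (n - k)) := by
  rw [A_div_factorial_s4, ← sum_neg_one_pow_div_factorial_mul_sub, sum_mul]
  refine sum_congr rfl fun k hk => ?_
  have hkn : k ≤ n := Nat.lt_succ_iff.mp (mem_range.mp hk)
  rw [Nat.cast_sub hkn, neg_pow, ← pow_mul_pow_sub t hkn]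
  ring

lemma hasSum_succ_mul_geometric {r : ℝ} (hr : |r| < 1) :
    HasSum (fun n : ℕ => ((n : ℝ) + 1) * r ^ n) (1 / (1 - r) ^ 2) := by
  simpa using hasSum_choose_mul_geometric_of_norm_lt_one 1 (r := r) (by rwa [Real.norm_eq_abs])

lemma summable_norm_succ_mul_geometric {r : ℝ} (hr : |r| < 1) :
    Summable fun n : ℕ => ‖((n : ℝ) + 1) * r ^ n‖ := by
  have hr' : |(|r|)| < 1 := by rwa [abs_abs]
  refine (hasSum_succ_mul_geometric hr').summable.congr fun n => ?_
  rw [Real.norm_eq_abs, abs_mul, abs_pow, abs_of_pos (by positivity : (0 : ℝ) < n + 1)]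

lemma summable_norm_pow_div_factorial (t : ℝ) : Summable fun n : ℕ => ‖t ^ n / (n ! : ℝ)‖ := by
  simpa [abs_div, abs_pow] using Real.summable_pow_div_factorial |t|

lemma hasSum_pow_div_factorial (t : ℝ) : HasSum (fun n : ℕ => t ^ n / n !) (Real.exp t) := by
  simpa [Real.exp_eq_exp_ℝ] using NormedSpace.expSeries_div_hasSum_exp t

lemma summable_norm_A_div_factorial_mul_pow {t : ℝ} (ht : |t| < 1) :
    Summable fun n => ‖(A n : ℝ) / n ! * t ^ n‖ := by
  simpa only [A_div_factorial_mul_pow] using summable_norm_sum_mul_range_of_summable_norm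
    (summable_norm_pow_div_factorial (-t)) (summable_norm_succ_mul_geometric ht)

lemma hasSum_A_div_factorial_mul_pow {t : ℝ} (ht : |t| < 1) :
    HasSum (fun n => (A n : ℝ) / n ! * t ^ n) (Real.exp (-t) / (1 - t) ^ 2) := by
  have h := hasSum_sum_range_mul_of_summable_norm
    (summable_norm_pow_div_factorial (-t)) (summable_norm_succ_mul_geometric ht)
  rw [(hasSum_pow_div_factorial (-t)).tsum_eq, (hasSum_succ_mul_geometric ht).tsum_eq] at h
  simpa only [A_div_factorial_mul_pow, mul_one_div] using h

lemma sum_Ank_mul_pow_succ (x z : ℝ) (m : ℕ) :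
    (∑ k ∈ Icc 1 (m + 1), (Ank (m + 1) k : ℝ) / (m + 1)! * z ^ k) * (m + 1 : ℕ) * x ^ (m + 1) =
      x * z * ∑ j ∈ range (m + 1), (A j : ℝ) / j ! * (x * z) ^ j * (x ^ (m - j) / (m - j)!) := by
  rw [← Ico_add_one_right_eq_Icc, sum_Ico_eq_sum_range, Nat.add_sub_cancel, sum_mul, sum_mul,
    mul_sum]
  refine sum_congr rfl fun j hj => ?_
  have hjm : j ≤ m := Nat.lt_succ_iff.mp (mem_range.mp hj)
  rw [Ank, Nat.add_sub_cancel, Nat.add_sub_cancel_left, Nat.cast_mul, Nat.cast_choose ℝ hjm,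
    Nat.factorial_succ, pow_succ, ← pow_mul_pow_sub x hjm]
  push_cast
  field_simp
  ring

theorem stmt4_general (x z : ℝ) (hxz : |x * z| < 1) :
    ∑' n : ℕ,
        (∑ k ∈ Finset.Icc 1 n, (Ank n k : ℝ) / (Nat.factorial n) * z ^ k) * n * x ^ n =
      x * z * Real.exp (x * (1 - z)) / (1 - x * z) ^ 2 := by
  have hsucc : HasSum
      (fun m : ℕ => (∑ k ∈ Icc 1 (m + 1), (Ank (m + 1) k : ℝ) / (m + 1)! * z ^ k) *
        (m + 1 : ℕ) * x ^ (m + 1))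
      (x * z * (Real.exp (-(x * z)) / (1 - x * z) ^ 2 * Real.exp x)) := by
    simpa only [sum_Ank_mul_pow_succ, (hasSum_A_div_factorial_mul_pow hxz).tsum_eq,
      (hasSum_pow_div_factorial x).tsum_eq] using
      (hasSum_sum_range_mul_of_summable_norm (summable_norm_A_div_factorial_mul_pow hxz)
        (summable_norm_pow_div_factorial x)).mul_left (x * z)
  rw [((hasSum_nat_add_iff' 1).mp (by simpa using hsucc)).tsum_eq,
    show x * (1 - z) = -(x * z) + x by ring, Real.exp_add]
  ring

theorem stmt4 (x z : ℝ) (hx : |x| < 1) (hxz : |x * z| < 1) :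
    ∑' n : ℕ,
        (∑ k ∈ Finset.Icc 1 n, (Ank n k : ℝ) / (Nat.factorial n) * z ^ k) * n * x ^ n =
      x * z * Real.exp (x * (1 - z)) / (1 - x * z) ^ 2 :=
  stmt4_general x z hxz
end

section
/- For every n ≥ ℓ ≥ 1, Σ_{k=1}^{n} (A(n,k)/n!)·(n-k)^ℓ = Σ_{m=0}^{ℓ} ((n-m)/n)·S(ℓ, m), where S(ℓ,m) are the Stirling numbers of the second kind. -/
open Finset Filter

/-- Stirling numbers of the second kind. -/
def stirling2 : ℕ → ℕ → ℕ
  | 0, 0 => 1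
  | 0, _ + 1 => 0
  | _ + 1, 0 => 0
  | n + 1, k + 1 => (k + 1) * stirling2 n (k + 1) + stirling2 n k

/-! Write `N = n - 1` and `j = k - 1`, so that the left side is
`(∑ⱼ C(N,j) A(j) (N-j)^ℓ) / (N+1)!`. Expanding `(N-j)^ℓ = ∑ₘ S(ℓ,m) (N-j)^{\underline m}` reduces
the claim to the falling moments `∑ⱼ C(N,j) A(j) (N-j)^{\underline m} = (N+1-m) N!`. Absorbing
`(N-j)^{\underline m}` into the binomial coefficient lowers `m` and `N` together, down to
`∑ⱼ C(N,j) A(j) = (N+1)!`. For that, the recurrence of `A` and Pascal's rule show that the shifted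
transform `∑ⱼ C(N,j) A(j+1)` is `N + 1` times the unshifted one. -/

theorem stirling2_eq_stirlingSecond : stirling2 = Nat.stirlingSecond := by
  funext n k
  induction n generalizing k with
  | zero => cases k <;> rfl
  | succ n ih => cases k <;> simp [stirling2, Nat.stirlingSecond_succ_succ, ih]

namespace Nat

theorem self_mul_descFactorial (x m : ℕ) :
    x * x.descFactorial m = x.descFactorial (m + 1) + m * x.descFactorial m := by
  rw [descFactorial_succ, ← add_mul]
  rcases le_or_gt m x with h | h
  · rw [Nat.sub_add_cancel h]
  · simp [descFactorial_eq_zero_iff_lt.2 h]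

theorem pow_eq_sum_stirlingSecond_mul_descFactorial (x ℓ : ℕ) :
    x ^ ℓ = ∑ m ∈ range (ℓ + 1), stirlingSecond ℓ m * x.descFactorial m := by
  induction ℓ with
  | zero => simp
  | succ ℓ ih =>
    have shift : ∑ m ∈ range (ℓ + 1), m * (stirlingSecond ℓ m * x.descFactorial m) =
        ∑ m ∈ range (ℓ + 1), (m + 1) * stirlingSecond ℓ (m + 1) * x.descFactorial (m + 1) := by
      rw [sum_range_succ', sum_range_succ, stirlingSecond_eq_zero_of_lt (lt_add_one ℓ)]
      simp only [zero_mul, mul_zero, add_zero, mul_assoc]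
    calc x ^ (ℓ + 1)
        = ∑ m ∈ range (ℓ + 1), stirlingSecond ℓ m * (x * x.descFactorial m) := by
          rw [pow_succ, ih, sum_mul]
          exact sum_congr rfl fun m _ => by ring
      _ = ∑ m ∈ range (ℓ + 1), stirlingSecond ℓ m * x.descFactorial (m + 1) +
            ∑ m ∈ range (ℓ + 1), m * (stirlingSecond ℓ m * x.descFactorial m) := by
          rw [← sum_add_distrib]
          exact sum_congr rfl fun m _ => by rw [self_mul_descFactorial]; ring
      _ = ∑ m ∈ range (ℓ + 1), stirlingSecond (ℓ + 1) (m + 1) * x.descFactorial (m + 1) := by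
          rw [shift, ← sum_add_distrib]
          exact sum_congr rfl fun m _ => by rw [stirlingSecond_succ_succ]; ring
      _ = ∑ m ∈ range (ℓ + 2), stirlingSecond (ℓ + 1) m * x.descFactorial m := by
          rw [sum_range_succ' _ (ℓ + 1)]
          simp

theorem succ_choose_mul_descFactorial_succ (K j m : ℕ) :
    (K + 1).choose j * (K + 1 - j).descFactorial (m + 1) =
      (K + 1) * (K.choose j * (K - j).descFactorial m) := by
  rcases le_or_gt j K with h | h
  · have absorb := choose_mul_succ_eq K j
    rw [show K + 1 - j = K - j + 1 by omega] at absorb ⊢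
    rw [succ_descFactorial_succ, ← mul_assoc, ← absorb]
    ring
  · simp [show K + 1 - j = 0 by omega, choose_eq_zero_of_lt h]

end Nat

open Nat

theorem sum_range_succ_choose_mul_s6 (a : ℕ → ℕ) (N : ℕ) :
    ∑ j ∈ range (N + 2), (N + 1).choose j * a j =
      ∑ j ∈ range (N + 1), N.choose j * a j + ∑ j ∈ range (N + 1), N.choose j * a (j + 1) := by
  have lower : ∑ j ∈ range (N + 1), N.choose j * a j =
      ∑ j ∈ range (N + 1), N.choose (j + 1) * a (j + 1) + a 0 := by
    rw [sum_range_succ', sum_range_succ, choose_succ_self]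
    simp
  rw [sum_range_succ', lower]
  simp only [choose_succ_succ, add_mul, sum_add_distrib, choose_zero_right, one_mul]
  ring

theorem sum_range_succ_choose_succ_mul_succ (b : ℕ → ℕ) (N : ℕ) :
    ∑ j ∈ range (N + 1), (N + 1).choose (j + 1) * ((j + 1) * b j) =
      (N + 1) * ∑ j ∈ range (N + 1), N.choose j * b j := by
  rw [mul_sum]
  refine sum_congr rfl fun j _ => ?_
  rw [← mul_assoc, ← mul_assoc, add_one_mul_choose_eq]

theorem sum_choose_mul_A_succ (N : ℕ) :
    ∑ j ∈ range (N + 1), N.choose j * A (j + 1) =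
      (N + 1) * ∑ j ∈ range (N + 1), N.choose j * A j := by
  cases N with
  | zero => simp [A]
  | succ N =>
    have recurrence (i : ℕ) : A (i + 2) = A (i + 1) + (i + 1) * (A (i + 1) + A i) := by
      rw [A]; ring
    calc ∑ j ∈ range (N + 2), (N + 1).choose j * A (j + 1)
        = (∑ i ∈ range (N + 1), (N + 1).choose (i + 1) * A (i + 1) + (N + 1).choose 0 * A 0) +
            ∑ i ∈ range (N + 1), (N + 1).choose (i + 1) * ((i + 1) * (A (i + 1) + A i)) := by
          rw [sum_range_succ']
          simp only [recurrence, mul_add, sum_add_distrib]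
          rw [show A 1 = A 0 from rfl]
          ring
      _ = (N + 2) * ∑ j ∈ range (N + 2), (N + 1).choose j * A j := by
          rw [← sum_range_succ' (fun j => (N + 1).choose j * A j),
            sum_range_succ_choose_succ_mul_succ, sum_range_succ_choose_mul_s6]
          simp only [mul_add, sum_add_distrib]
          ring

theorem sum_choose_mul_A_s6 (N : ℕ) : ∑ j ∈ range (N + 1), N.choose j * A j = (N + 1)! := by
  induction N with
  | zero => simp [A]
  | succ N ih =>
    rw [sum_range_succ_choose_mul_s6, sum_choose_mul_A_succ, ih, factorial_succ (N + 1)]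
    ring

-- Truncated subtraction makes this hold for every `m`: both sides vanish once `m > N + 1`.
theorem sum_choose_mul_A_mul_descFactorial (m N : ℕ) :
    ∑ j ∈ range (N + 1), N.choose j * A j * (N - j).descFactorial m = (N + 1 - m) * N ! := by
  induction m generalizing N with
  | zero => simp [sum_choose_mul_A_s6, factorial_succ]
  | succ m ih =>
    cases N with
    | zero => simp
    | succ K =>
      calc ∑ j ∈ range (K + 2), (K + 1).choose j * A j * (K + 1 - j).descFactorial (m + 1)
          = (K + 1) * ∑ j ∈ range (K + 2), K.choose j * A j * (K - j).descFactorial m := by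
            rw [mul_sum]
            refine sum_congr rfl fun j _ => ?_
            rw [mul_right_comm, succ_choose_mul_descFactorial_succ]
            ring
        _ = (K + 1 + 1 - (m + 1)) * (K + 1)! := by
            rw [sum_range_succ, choose_succ_self, ih, factorial_succ]
            simp only [zero_mul, add_zero, add_tsub_add_eq_tsub_right]
            ring

theorem sum_choose_mul_A_mul_pow (N ℓ : ℕ) :
    ∑ j ∈ range (N + 1), N.choose j * A j * (N - j) ^ ℓ =
      ∑ m ∈ range (ℓ + 1), stirlingSecond ℓ m * ((N + 1 - m) * N !) := by
  simp only [pow_eq_sum_stirlingSecond_mul_descFactorial _ ℓ, mul_sum,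
    ← sum_choose_mul_A_mul_descFactorial]
  rw [sum_comm]
  exact sum_congr rfl fun m _ => sum_congr rfl fun j _ => by ring

theorem stmt6_general (ℓ n : ℕ) :
    ∑ k ∈ Finset.Icc 1 n, (Ank n k : ℝ) / (Nat.factorial n) * ((n - k : ℕ) : ℝ) ^ ℓ =
      ∑ m ∈ Finset.range (ℓ + 1), ((n - m : ℕ) : ℝ) / n * (stirling2 ℓ m : ℝ) := by
  cases n with
  | zero => simp
  | succ N =>
    have key := congrArg (fun s : ℕ => (s : ℝ) / (N + 1)!) (sum_choose_mul_A_mul_pow N ℓ)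
    rw [← Ico_add_one_right_eq_Icc, sum_Ico_eq_sum_range, stirling2_eq_stirlingSecond]
    simp only [add_tsub_cancel_right, push_cast, sum_div, factorial_succ] at key ⊢
    convert key using 2 with j
    · rw [add_comm 1 j]
      simp only [Ank, add_tsub_cancel_right, Nat.add_sub_add_right, cast_mul]
      ring
    · field_simp

theorem stmt6 (ℓ n : ℕ) (hℓ : 1 ≤ ℓ) (hℓn : ℓ ≤ n) :
    ∑ k ∈ Finset.Icc 1 n, (Ank n k : ℝ) / (Nat.factorial n) * ((n - k : ℕ) : ℝ) ^ ℓ =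
      ∑ m ∈ Finset.range (ℓ + 1), ((n - m : ℕ) : ℝ) / n * (stirling2 ℓ m : ℝ) :=
  stmt6_general ℓ n
end

section
/- For every n ≥ 0, A(n) = ⌊(n+2)·n!/e + 1/2⌋, i.e., A(n) is the nearest integer to (n+2)·n!/e. -/
open Finset Filter

/-!
(n + 1)·A(n) satisfies the derangement recurrence, so it equals the number D(n + 2) of
derangements of n + 2 points. Inclusion–exclusion writes D(m) as m! times the degree-m Taylor
polynomial of exp at -1, whose remainder bound gives |D(m) - m!/e| ≤ (m + 2)/(m + 1)² < 1/2
for m ≥ 2. Dividing by n + 1 only shrinks the error, so A(n) lies within 1/2 of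
(n + 2)!/((n + 1)e) = (n + 2)·n!/e.
-/

open scoped Nat

theorem round_eq_of_abs_sub_lt_half {α : Type*} [Field α] [LinearOrder α] [IsStrictOrderedRing α]
    [FloorRing α] {x : α} {k : ℤ} (h : |x - k| < 1 / 2) : round x = k := by
  rw [round_eq_iff]
  obtain ⟨hlo, hhi⟩ := abs_lt.mp h
  constructor <;> linarith

theorem succ_mul_A_eq_numDerangements (n : ℕ) : (n + 1) * A n = numDerangements (n + 2) := by
  induction n using Nat.twoStepInduction with
  | zero => rfl
  | one => rfl
  | more n ih₀ ih₁ =>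
    rw [numDerangements_add_two, ← ih₀, ← ih₁, A]
    ring

theorem numDerangements_eq_factorial_mul_sum (n : ℕ) :
    (numDerangements n : ℝ) = n ! * ∑ k ∈ range (n + 1), (-1 : ℝ) ^ k / k ! := by
  rw [← Int.cast_natCast, numDerangements_sum, mul_sum]
  push_cast
  refine sum_congr rfl fun k hk => ?_
  have hkn : k ≤ n := mem_range_succ_iff.mp hk
  rw [Nat.ascFactorial_eq_div, add_tsub_cancel_of_le hkn]
  push_cast [Nat.factorial_dvd_factorial hkn]
  field

theorem abs_numDerangements_sub_factorial_mul_exp_le (n : ℕ) :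
    |(numDerangements n : ℝ) - n ! * Real.exp (-1)| ≤ (n + 2) / (n + 1) ^ 2 := by
  have htail := Real.exp_bound (x := -1) (by norm_num) (n := n + 1) n.succ_pos
  simp only [abs_neg, abs_one, one_pow, one_mul] at htail
  rw [numDerangements_eq_factorial_mul_sum, ← mul_sub, abs_mul, abs_sub_comm, Nat.abs_cast]
  calc (n ! : ℝ) * |Real.exp (-1) - ∑ k ∈ range (n + 1), (-1 : ℝ) ^ k / k !|
      ≤ n ! * ((n + 1).succ / ((n + 1)! * (n + 1 : ℕ))) := by gcongr
    _ = (n + 2) / (n + 1) ^ 2 := by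
      rw [Nat.factorial_succ]
      push_cast
      field

theorem abs_A_sub_lt_half (n : ℕ) : |(A n : ℝ) - (n + 2) * n ! / Real.exp 1| < 1 / 2 := by
  have hD := abs_numDerangements_sub_factorial_mul_exp_le (n + 2)
  rw [← succ_mul_A_eq_numDerangements, Real.exp_neg] at hD
  have hfact : ((n + 2)! : ℝ) = (n + 2) * (n + 1) * n ! := by
    rw [Nat.factorial_succ, Nat.factorial_succ]; push_cast; ring
  have hscale : (((n + 1) * A n : ℕ) : ℝ) - (n + 2)! * (Real.exp 1)⁻¹
      = (n + 1) * ((A n : ℝ) - (n + 2) * n ! / Real.exp 1) := by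
    rw [hfact]; push_cast; field
  rw [hscale, abs_mul, abs_of_pos (by positivity)] at hD
  have hsmall : ((n + 2 : ℕ) + 2 : ℝ) / ((n + 2 : ℕ) + 1) ^ 2 < (n + 1) * (1 / 2) := by
    rw [div_lt_iff₀ (by positivity)]; push_cast; nlinarith
  exact lt_of_mul_lt_mul_left (hD.trans_lt hsmall) (by positivity)

theorem stmt9 (n : ℕ) :
    (A n : ℤ) = ⌊((n + 2 : ℝ) * (Nat.factorial n) / Real.exp 1 + 1 / 2)⌋ := by
  rw [← round_eq, eq_comm]
  apply round_eq_of_abs_sub_lt_half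
  rw [abs_sub_comm]
  exact_mod_cast abs_A_sub_lt_half n
end

section
/- For every n ≥ 1, Σ_{t=1}^{n} S_n(t)/t^2 = 1/n^2 + Σ_{m=1}^{n-1} (n-m-1)!/(n·n!) + Σ_{m=1}^{n-1} ((n-m)!/(m·n!))·(H_n − H_{n-m}), where H_j is the j-th harmonic number. -/
open Finset Filter

/-- Harmonic numbers. -/
noncomputable def H (j : ℕ) : ℝ := ∑ i ∈ Finset.Icc 1 j, (1 : ℝ) / i

/-!
With `g x = (x + 1)!`, the recurrence for `A` says exactly that `A m = Δᵐ g 0`, so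
`A m = ∑ (-1)^(m-v) C(m,v) (v+1)!`. Substituting this into the partial sums of
`A(n,k) = C(n-1,k-1) A(k-1)` and using `C(N,j) C(j,v) = C(N,v) C(N-v,j-v)` together with the partial
alternating sum `∑_{i ≤ k} (-1)^i C(M,i) = (-1)^k C(M-1,k)` gives
`∑_{j ≤ s} C(N,j) A j = ∑_{v ≤ s} C(N,v) (v+1)! (-1)^(s-v) C(N-v-1,s-v)`.
Exchanging the sums over `t` and `v`, each inner sum is a forward difference of `x ↦ 1/(x+1)²`, and
`Δᵐ (1/(x+1)²) (q) = (-1)^m m! q!/(q+m+1)! (H(q+m+1) - H q)` by induction on `m`.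
-/

open Nat

lemma H_succ (j : ℕ) : H (j + 1) = H j + 1 / (j + 1 : ℝ) := by
  rw [H, H, sum_Icc_succ_top (by omega)]
  push_cast
  rfl

section CommRing

variable {R : Type*} [CommRing R]

lemma fwdDiff_iter_eq_sum_neg_one_pow (f : ℕ → R) (m y : ℕ) :
    (fwdDiff 1)^[m] f y = ∑ k ∈ range (m + 1), (-1 : R) ^ (m - k) * m.choose k * f (y + k) := by
  simp [fwdDiff_iter_eq_sum_shift, zsmul_eq_mul]

lemma sum_neg_one_pow_mul_choose_mul_eq_fwdDiff_iter (f : ℕ → R) (m y : ℕ) :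
    ∑ r ∈ range (m + 1), (-1 : R) ^ r * m.choose r * f (y + r)
      = (-1) ^ m * (fwdDiff 1)^[m] f y := by
  rw [fwdDiff_iter_eq_sum_neg_one_pow, mul_sum]
  refine sum_congr rfl fun r hr => ?_
  obtain ⟨k, rfl⟩ := Nat.exists_eq_add_of_le (Nat.lt_succ_iff.mp (mem_range.mp hr))
  have hsq : ((-1 : R) ^ k) * (-1) ^ k = 1 := by rw [← mul_pow]; norm_num
  rw [Nat.add_sub_cancel_left, pow_add]
  linear_combination (-(-1 : R) ^ r * (r + k).choose r * f (y + r)) * hsq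

lemma alternating_sum_range_choose_eq_choose_pred {M k : ℕ} (hk : k ≤ M) :
    ∑ i ∈ range (k + 1), (-1 : R) ^ i * M.choose i = (-1) ^ k * (M - 1).choose k := by
  rcases M with _ | M
  · obtain rfl : k = 0 := by omega
    simp
  · exact_mod_cast congrArg (Int.cast : ℤ → R) Int.alternating_sum_range_choose_eq_choose

end CommRing

-- A Leibniz rule for `Δ` applied to `g (x + 1) = (x + 2) g x`; at `m = 0` the truncated `m - 1`
-- is harmless since its coefficient vanishes.
lemma fwdDiff_iter_factorial_succ_add_one (m v : ℕ) :
    (fwdDiff 1)^[m] (fun x : ℕ => ((x + 1)! : ℝ)) (v + 1)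
      = (v + m + 2) * (fwdDiff 1)^[m] (fun x : ℕ => ((x + 1)! : ℝ)) v
        + m * (fwdDiff 1)^[m - 1] (fun x : ℕ => ((x + 1)! : ℝ)) v := by
  induction m generalizing v with
  | zero =>
    simp only [Function.iterate_zero, id, CharP.cast_eq_zero, zero_mul, add_zero]
    push_cast [factorial_succ (v + 1)]
    ring
  | succ m ih =>
    set g := fun x : ℕ => ((x + 1)! : ℝ)
    have hstep : (m : ℝ) * ((fwdDiff 1)^[m - 1] g (v + 1) - (fwdDiff 1)^[m - 1] g v)
        = m * (fwdDiff 1)^[m] g v := by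
      rcases m with _ | m
      · simp
      · simp [Function.iterate_succ_apply', fwdDiff]
    simp only [Function.iterate_succ_apply', fwdDiff, Nat.add_sub_cancel] at *
    rw [ih (v + 1), ih v]
    push_cast
    linear_combination hstep

lemma A_eq_fwdDiff_iter : ∀ m, (A m : ℝ) = (fwdDiff 1)^[m] (fun x : ℕ => ((x + 1)! : ℝ)) 0
  | 0 => by simp [A]
  | 1 => by simp [A, fwdDiff]; norm_num
  | m + 2 => by
    rw [Function.iterate_succ_apply', fwdDiff, zero_add, fwdDiff_iter_factorial_succ_add_one,
      ← A_eq_fwdDiff_iter (m + 1), Nat.add_sub_cancel, ← A_eq_fwdDiff_iter m, A]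
    push_cast
    ring

lemma A_eq_sum (m : ℕ) :
    (A m : ℝ) = ∑ v ∈ range (m + 1), (-1 : ℝ) ^ (m - v) * m.choose v * (v + 1)! := by
  rw [A_eq_fwdDiff_iter, fwdDiff_iter_eq_sum_neg_one_pow]
  simp

lemma sum_range_choose_mul_A {N s : ℕ} (hs : s ≤ N) :
    ∑ j ∈ range (s + 1), (N.choose j : ℝ) * A j
      = ∑ v ∈ range (s + 1),
          (N.choose v : ℝ) * (v + 1)! * ((-1) ^ (s - v) * (N - v - 1).choose (s - v)) := by
  simp_rw [A_eq_sum, mul_sum]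
  simp only [range_eq_Ico]
  rw [← sum_Ico_Ico_comm]
  refine sum_congr rfl fun v hv => ?_
  have hvs : v ≤ s := by simp at hv; omega
  rw [← alternating_sum_range_choose_eq_choose_pred (by omega : s - v ≤ N - v), mul_sum,
    sum_Ico_eq_sum_range, show s + 1 - v = s - v + 1 by omega]
  refine sum_congr rfl fun i _ => ?_
  rw [Nat.add_sub_cancel_left]
  have hchoose : (N.choose (v + i) : ℝ) * (v + i).choose v = N.choose v * (N - v).choose i := by
    have := Nat.choose_mul (n := N) (k := v + i) (s := v) (by omega)
    rw [Nat.add_sub_cancel_left] at this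
    exact_mod_cast this
  linear_combination (-1 : ℝ) ^ i * (v + 1)! * hchoose

lemma fwdDiff_iter_inv_sq (m q : ℕ) :
    (fwdDiff 1)^[m] (fun x : ℕ => 1 / ((x : ℝ) + 1) ^ 2) q
      = (-1) ^ m * (m ! * q ! / (q + m + 1)!) * (H (q + m + 1) - H q) := by
  induction m generalizing q with
  | zero =>
    simp only [Function.iterate_zero, id, H_succ]
    push_cast [factorial_succ]
    field_simp
    ring
  | succ m ih =>
    rw [Function.iterate_succ_apply', fwdDiff, ih, ih, show q + 1 + m + 1 = q + m + 1 + 1 by ring,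
      show q + (m + 1) + 1 = q + m + 1 + 1 by ring, H_succ (q + m + 1), H_succ q]
    push_cast [factorial_succ]
    field_simp
    ring

lemma sum_Ico_neg_one_pow_mul_choose_div_sq {v N : ℕ} (hv : v < N) :
    ∑ s ∈ Ico v (N + 1), (-1 : ℝ) ^ (s - v) * (N - v - 1).choose (s - v) / ((s : ℝ) + 1) ^ 2
      = (N - v - 1)! * v ! / N ! * (H N - H v) := by
  obtain ⟨m, rfl⟩ : ∃ m, N = v + m + 1 := ⟨N - v - 1, by omega⟩
  rw [sum_Ico_eq_sum_range, show v + m + 1 + 1 - v = m + 1 + 1 by omega, sum_range_succ,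
    Nat.add_sub_cancel_left, show v + m + 1 - v - 1 = m by omega, choose_succ_self]
  simp only [Nat.add_sub_cancel_left, CharP.cast_eq_zero, mul_zero, zero_div, add_zero]
  have := sum_neg_one_pow_mul_choose_mul_eq_fwdDiff_iter (fun x : ℕ => 1 / ((x : ℝ) + 1) ^ 2) m v
  simp only [← div_eq_mul_one_div, fwdDiff_iter_inv_sq] at this
  push_cast at this ⊢
  rw [this, ← mul_assoc, ← mul_assoc, ← mul_pow]
  norm_num

lemma choose_mul_factorial_mul_harmonic {N v : ℕ} (hv : v < N) :
    (N.choose v : ℝ) * (v + 1)! * ((N - v - 1)! * v ! / N ! * (H N - H v)) / (N + 1)!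
      = (v ! : ℝ) / ((N + 1) * (N + 1)!)
        + (v + 1)! / ((N - v : ℕ) * (N + 1)!) * (H (N + 1) - H (v + 1)) := by
  obtain ⟨m, rfl⟩ : ∃ m, N = m + 1 + v := ⟨N - v - 1, by omega⟩
  have hchoose : ((m + 1 + v).choose v : ℝ) * (m + 1)! * v ! = (m + 1 + v)! := by
    exact_mod_cast add_choose_mul_factorial_mul_factorial (m + 1) v
  rw [show m + 1 + v - v - 1 = m by omega, show m + 1 + v - v = m + 1 by omega, H_succ, H_succ]
  have hchoose_ne : ((m + 1 + v).choose v : ℝ) ≠ 0 := by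
    exact_mod_cast (Nat.choose_pos (by omega)).ne'
  rw [← hchoose]
  push_cast [factorial_succ]
  field_simp
  ring

lemma sum_Icc_Ank (N s : ℕ) :
    ∑ k ∈ Icc 1 (s + 1), (Ank (N + 1) k : ℝ) = ∑ j ∈ range (s + 1), (N.choose j : ℝ) * A j := by
  rw [← Ico_add_one_right_eq_Icc, sum_Ico_eq_sum_range, Nat.add_sub_cancel]
  simp [Ank, add_comm 1]

lemma sum_Icc_sum_Ank_div_sq (N : ℕ) :
    ∑ t ∈ Icc 1 (N + 1), (∑ k ∈ Icc 1 t, (Ank (N + 1) k : ℝ) / (N + 1)!) / t ^ 2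
      = ∑ v ∈ range (N + 1), (N.choose v : ℝ) * (v + 1)! *
          (∑ s ∈ Ico v (N + 1), (-1 : ℝ) ^ (s - v) * (N - v - 1).choose (s - v) / ((s : ℝ) + 1) ^ 2)
          / (N + 1)! := by
  rw [← Ico_add_one_right_eq_Icc, sum_Ico_eq_sum_range, Nat.add_sub_cancel]
  have hs : ∀ s ∈ range (N + 1),
      (∑ k ∈ Icc 1 (1 + s), (Ank (N + 1) k : ℝ) / (N + 1)!) / ((1 + s : ℕ) : ℝ) ^ 2
        = ∑ v ∈ range (s + 1), (N.choose v : ℝ) * (v + 1)! *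
            ((-1 : ℝ) ^ (s - v) * (N - v - 1).choose (s - v) / ((s : ℝ) + 1) ^ 2) / (N + 1)! := by
    intro s hs
    rw [← sum_div, add_comm 1 s, sum_Icc_Ank,
      sum_range_choose_mul_A (by simpa [Nat.lt_succ_iff] using hs), sum_div, sum_div]
    refine sum_congr rfl fun v _ => ?_
    push_cast
    ring
  rw [sum_congr rfl hs]
  simp only [range_eq_Ico]
  rw [← sum_Ico_Ico_comm]
  refine sum_congr rfl fun v _ => ?_
  rw [mul_sum, sum_div]

theorem stmt14 (n : ℕ) (hn : 1 ≤ n) :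
    ∑ t ∈ Finset.Icc 1 n,
        (∑ k ∈ Finset.Icc 1 t, (Ank n k : ℝ) / (Nat.factorial n)) / t ^ 2 =
      1 / (n : ℝ) ^ 2
        + ∑ m ∈ Finset.Icc 1 (n - 1), (Nat.factorial (n - m - 1) : ℝ) / (n * Nat.factorial n)
        + ∑ m ∈ Finset.Icc 1 (n - 1),
            (Nat.factorial (n - m) : ℝ) / (m * Nat.factorial n) * (H n - H (n - m)) := by
  obtain ⟨N, rfl⟩ := Nat.exists_eq_add_of_le' hn
  have htop : (N.choose N : ℝ) * (N + 1)! *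
      (∑ s ∈ Ico N (N + 1), (-1 : ℝ) ^ (s - N) * (N - N - 1).choose (s - N) / ((s : ℝ) + 1) ^ 2)
        / (N + 1)! = 1 / ((N + 1 : ℕ) : ℝ) ^ 2 := by
    simp [field]
  have hbody : ∀ v ∈ range N, (N.choose v : ℝ) * (v + 1)! *
      (∑ s ∈ Ico v (N + 1), (-1 : ℝ) ^ (s - v) * (N - v - 1).choose (s - v) / ((s : ℝ) + 1) ^ 2)
        / (N + 1)!
        = (v ! : ℝ) / ((N + 1) * (N + 1)!)
          + (v + 1)! / ((N - v : ℕ) * (N + 1)!) * (H (N + 1) - H (v + 1)) := by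
    intro v hv
    rw [sum_Ico_neg_one_pow_mul_choose_div_sq (mem_range.mp hv),
      choose_mul_factorial_mul_harmonic (mem_range.mp hv)]
  rw [sum_Icc_sum_Ank_div_sq, sum_range_succ, htop, sum_congr rfl hbody, add_assoc,
    ← sum_add_distrib, Nat.add_sub_cancel, add_comm, range_eq_Ico, show Icc 1 N = Ico (N + 1 - N) (N + 1 - 0) by
      rw [Nat.add_sub_cancel_left, Nat.sub_zero, Ico_add_one_right_eq_Icc],
    ← sum_Ico_reflect _ _ (by omega)]
  refine congrArg _ (sum_congr rfl fun v hv => ?_)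
  replace hv : v < N := (mem_Ico.mp hv).2
  rw [show N + 1 - (N - v) - 1 = v by omega, show N + 1 - (N - v) = v + 1 by omega]
  push_cast
  rfl
end

section
/- Let ℓ be a nonnegative integer and s a real number. Then there is a constant C (depending only on ℓ and s) such that for all n ≥ 1, Σ_{k=1}^{n} (A(n,k)/n!)·(n-k)^ℓ·k^s ≤ C·n^s. -/
open Finset Filter

/-!
Since `A m ≤ (m + 1)!`, the weight `A(n,k)/n!` is at most `1/(n-k)!`. Writing `j = n - k`,
we have `k ≤ n ≤ (j + 1) k`, so `k^s ≤ (j + 1)^m n^s` whenever `|s| ≤ m`, and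
`j^ℓ (j + 1)^m ≤ B^j` for `B = 2^(ℓ + m)`. Hence the sum is at most `n^s ∑ B^j / j! ≤ exp B · n^s`.
-/

open Nat

theorem A_le_factorial_succ : ∀ m, A m ≤ (m + 1)!
  | 0 => le_rfl
  | 1 => by decide
  | n + 2 => by
    have h₁ := A_le_factorial_succ (n + 1)
    have h₀ := A_le_factorial_succ n
    have hfac : (n + 1) * (n + 1)! ≤ (n + 2)! := by
      rw [factorial_succ (n + 1)]; gcongr; omega
    calc A (n + 2) = (n + 2) * A (n + 1) + (n + 1) * A n := rfl
      _ ≤ (n + 2) * (n + 2)! + (n + 2)! := by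
        gcongr; exact (Nat.mul_le_mul_left _ h₀).trans hfac
      _ = (n + 3)! := by rw [factorial_succ (n + 2)]; ring

theorem Ank_mul_factorial_le {n k : ℕ} (hk : 1 ≤ k) (hkn : k ≤ n) :
    Ank n k * (n - k)! ≤ n ! := by
  obtain ⟨i, rfl⟩ : ∃ i, k = i + 1 := ⟨k - 1, by omega⟩
  obtain ⟨j, rfl⟩ : ∃ j, n = j + (i + 1) := ⟨n - (i + 1), by omega⟩
  have hchoose := add_choose_mul_factorial_mul_factorial j i
  calc Ank (j + (i + 1)) (i + 1) * (j + (i + 1) - (i + 1))!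
      = (j + i).choose i * A i * j ! := by simp [Ank, ← add_assoc]
    _ ≤ (j + i).choose i * (i + 1)! * j ! := by gcongr; exact A_le_factorial_succ i
    _ = (i + 1) * (j + i)! := by rw [factorial_succ, ← hchoose]; ring
    _ ≤ (j + (i + 1))! := by
      rw [← add_assoc, factorial_succ]; gcongr; omega

theorem Ank_div_factorial_le {n k : ℕ} (hk : 1 ≤ k) (hkn : k ≤ n) :
    (Ank n k : ℝ) / n ! ≤ 1 / (n - k)! := by
  rw [div_le_div_iff₀ (mod_cast factorial_pos n) (mod_cast factorial_pos (n - k)), one_mul]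
  exact_mod_cast Ank_mul_factorial_le hk hkn

theorem rpow_le_pow_mul_rpow {x y c s : ℝ} {m : ℕ} (hx : 0 < x) (hxy : x ≤ y)
    (hyc : y ≤ c * x) (hc : 1 ≤ c) (hs : |s| ≤ m) : x ^ s ≤ c ^ m * y ^ s := by
  rcases le_total 0 s with hs₀ | hs₀
  · calc x ^ s ≤ y ^ s := Real.rpow_le_rpow hx.le hxy hs₀
      _ ≤ c ^ m * y ^ s :=
          le_mul_of_one_le_left (Real.rpow_nonneg (hx.le.trans hxy) s) (one_le_pow₀ hc)
  · have hc₀ : 0 < c := by linarith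
    calc x ^ s = c ^ (-s) * (c * x) ^ s := by
          rw [Real.mul_rpow hc₀.le hx.le, ← mul_assoc, ← Real.rpow_add hc₀]; simp
      _ ≤ c ^ (m : ℝ) * y ^ s :=
          mul_le_mul (Real.rpow_le_rpow_of_exponent_le hc ((neg_le_abs s).trans hs))
            (Real.rpow_le_rpow_of_nonpos (by linarith) hyc hs₀) (by positivity) (by positivity)
      _ = c ^ m * y ^ s := by rw [Real.rpow_natCast]

theorem succ_pow_le_two_pow_pow (j p : ℕ) :
    ((j + 1 : ℕ) : ℝ) ^ p ≤ ((2 : ℝ) ^ p) ^ j := by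
  rw [← pow_mul, mul_comm, pow_mul]
  gcongr
  exact_mod_cast j.lt_two_pow_self

theorem sum_Icc_one_sub_eq_sum_range {M : Type*} [AddCommMonoid M] (f : ℕ → M) (n : ℕ) :
    ∑ k ∈ Icc 1 n, f (n - k) = ∑ j ∈ range n, f j := by
  rw [← Finset.Ico_add_one_right_eq_Icc, sum_Ico_eq_sum_range, ← sum_range_reflect f n]
  refine sum_congr (by simp) fun i _ => ?_
  congr 1; omega

theorem Ank_term_le {ℓ m n k : ℕ} {s : ℝ} (hs : |s| ≤ m) (hk : 1 ≤ k) (hkn : k ≤ n) :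
    (Ank n k : ℝ) / n ! * ((n - k : ℕ) : ℝ) ^ ℓ * (k : ℝ) ^ s ≤
      ((2 : ℝ) ^ (ℓ + m)) ^ (n - k) / (n - k)! * (n : ℝ) ^ s := by
  set j := n - k
  have hn : n ≤ (j + 1) * k := by nlinarith [Nat.sub_add_cancel hkn]
  have hrpow : (k : ℝ) ^ s ≤ ((j + 1 : ℕ) : ℝ) ^ m * (n : ℝ) ^ s :=
    rpow_le_pow_mul_rpow (by exact_mod_cast hk) (by exact_mod_cast hkn) (by exact_mod_cast hn)
      (by simp) hs
  have hpoly : (j : ℝ) ^ ℓ * ((j + 1 : ℕ) : ℝ) ^ m ≤ ((2 : ℝ) ^ (ℓ + m)) ^ j :=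
    calc (j : ℝ) ^ ℓ * ((j + 1 : ℕ) : ℝ) ^ m
        ≤ ((j + 1 : ℕ) : ℝ) ^ ℓ * ((j + 1 : ℕ) : ℝ) ^ m := by gcongr; simp
      _ = ((j + 1 : ℕ) : ℝ) ^ (ℓ + m) := by rw [← pow_add]
      _ ≤ ((2 : ℝ) ^ (ℓ + m)) ^ j := succ_pow_le_two_pow_pow j (ℓ + m)
  calc (Ank n k : ℝ) / n ! * (j : ℝ) ^ ℓ * (k : ℝ) ^ s
      ≤ 1 / j ! * (j : ℝ) ^ ℓ * (((j + 1 : ℕ) : ℝ) ^ m * (n : ℝ) ^ s) := by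
        gcongr ?_ * _ * ?_
        exact Ank_div_factorial_le hk hkn
    _ = (j : ℝ) ^ ℓ * ((j + 1 : ℕ) : ℝ) ^ m / j ! * (n : ℝ) ^ s := by ring
    _ ≤ ((2 : ℝ) ^ (ℓ + m)) ^ j / j ! * (n : ℝ) ^ s := by gcongr

theorem stmt18 (ℓ : ℕ) (s : ℝ) :
    ∃ C : ℝ, ∀ n : ℕ, 1 ≤ n →
      ∑ k ∈ Finset.Icc 1 n,
          (Ank n k : ℝ) / (Nat.factorial n) * ((n - k : ℕ) : ℝ) ^ ℓ * (k : ℝ) ^ s ≤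
        C * (n : ℝ) ^ s := by
  obtain ⟨m, hm⟩ := exists_nat_ge |s|
  set B : ℝ := 2 ^ (ℓ + m)
  refine ⟨Real.exp B, fun n _ => ?_⟩
  calc ∑ k ∈ Icc 1 n, (Ank n k : ℝ) / n ! * ((n - k : ℕ) : ℝ) ^ ℓ * (k : ℝ) ^ s
      ≤ ∑ k ∈ Icc 1 n, B ^ (n - k) / (n - k)! * (n : ℝ) ^ s :=
        sum_le_sum fun k hk => Ank_term_le hm (mem_Icc.1 hk).1 (mem_Icc.1 hk).2
    _ = (∑ j ∈ range n, B ^ j / j !) * (n : ℝ) ^ s := by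
        rw [← sum_mul, sum_Icc_one_sub_eq_sum_range (fun j => B ^ j / j !)]
    _ ≤ Real.exp B * (n : ℝ) ^ s := by
        gcongr
        exact Real.sum_le_exp_of_nonneg (by positivity) n
end
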